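/- The map γ ↦ σ(γ) is a bijection between the set of combinatorially coherent φ-monotone paths on ◇^n and the set of nonzero sign vectors {−1,0,1}^{n−1} \ {0}; in particular there are exactly 3^{n−1} − 1 combinatorially coherent φ-monotone paths. -/

import Mathlib

open scoped BigOperators

/-- The `i`-th standard basis vector of `ℝ^n`. -/
noncomputable def stdVec (n : ℕ) (i : Fin n) : Fin n → ℝ := Pi.single i 1

/-- The last standard basis vector `e_n` of `ℝ^{n+2}`. -/
noncomputable def lastVec (n : ℕ) : Fin (n + 2) → ℝ := stdVec (n + 2) (Fin.last (n + 1))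

/-- The linear functional `φ(x) = ∑ i, a i * x i`. -/
def phi (n : ℕ) (a : Fin (n + 2) → ℝ) (x : Fin (n + 2) → ℝ) : ℝ := ∑ i, a i * x i

/-- A vertex of the cross-polytope `◇^n`: one of the `2n` points `±e_i`. -/
def IsCPVertex (n : ℕ) (x : Fin n → ℝ) : Prop :=
  ∃ i : Fin n, x = stdVec n i ∨ x = -stdVec n i

/-- The cross-polytope `◇^n = conv{±e_1, …, ±e_n}`. -/
noncomputable def crossPoly (n : ℕ) : Set (Fin n → ℝ) :=
  convexHull ℝ {x | IsCPVertex n x}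

/-- A `φ`-monotone path on `◇^{n+2}`, encoded as the list of its vertices:
it starts at `-e_n`, ends at `e_n`, visits only vertices, is strictly `φ`-increasing,
and consecutive vertices are not antipodal. -/
def IsMonoPath (n : ℕ) (a : Fin (n + 2) → ℝ) (l : List (Fin (n + 2) → ℝ)) : Prop :=
  l.head? = some (-lastVec n) ∧
  l.getLast? = some (lastVec n) ∧
  (∀ v ∈ l, IsCPVertex (n + 2) v) ∧
  l.Chain' (fun u v => phi n a u < phi n a v ∧ v ≠ -u)

/-- A monotone path is combinatorially coherent if no antipodal pair `±e_j`
(`j ∈ {1, …, n-1}`) occurs among its interior vertices. -/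
def CombCoherent (n : ℕ) (l : List (Fin (n + 2) → ℝ)) : Prop :=
  ¬ ∃ j : Fin (n + 1), stdVec (n + 2) j.castSucc ∈ l.tail.dropLast ∧
      -stdVec (n + 2) j.castSucc ∈ l.tail.dropLast

/-- The Billera–Sturmfels point `p(γ)` associated to a monotone path. -/
noncomputable def pathPoint (n : ℕ) (a : Fin (n + 2) → ℝ) (l : List (Fin (n + 2) → ℝ)) :
    Fin (n + 2) → ℝ :=
  ((l.zip l.tail).map fun q =>
    ((phi n a q.2 - phi n a q.1) / (4 * a (Fin.last (n + 1)))) • (q.1 + q.2)).sum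

/-- The monotone path polytope `MPP_φ(◇^{n+2})`. -/
noncomputable def MPP (n : ℕ) (a : Fin (n + 2) → ℝ) : Set (Fin (n + 2) → ℝ) :=
  convexHull ℝ {x | ∃ l, IsMonoPath n a l ∧ x = pathPoint n a l}

open Classical in
/-- The sign vector `σ(γ) ∈ {-1,0,1}^{n+1}` of a monotone path. -/
noncomputable def sigmaVec (n : ℕ) (l : List (Fin (n + 2) → ℝ)) : Fin (n + 1) → ℤ :=
  fun j =>
    if stdVec (n + 2) j.castSucc ∈ l then 1
    else if -stdVec (n + 2) j.castSucc ∈ l then -1 else 0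

/-!
A `φ`-monotone path is strictly `φ`-increasing, so it is determined by its vertex set. Besides
`±e_n`, a coherent path visits at most one of `±e_j` for each `j < n`, so its vertex set is
`{±e_n} ∪ {σ_j e_j | σ_j ≠ 0}` and `σ` is injective. Conversely, since `0 < a_1 < ⋯ < a_n`, every
nonzero sign vector `u` is realised by the path `-e_n`, then the `-e_j` with `u_j = -1` by
decreasing `j`, then the `e_j` with `u_j = 1` by increasing `j`, then `e_n`. The sign vector `0`
is not realised because `-e_n` and `e_n` are antipodal.
-/

section Vectors

variable {n : ℕ}

lemma stdVec_injective : Function.Injective (stdVec n) := fun i j h => by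
  simpa [stdVec, Pi.single_apply, eq_comm] using congrFun h j

lemma stdVec_ne_neg_stdVec (i j : Fin n) : stdVec n i ≠ -stdVec n j := by
  intro h
  have hi := congrFun h i
  by_cases hij : i = j
  · simp [stdVec, hij] at hi
    norm_num at hi
  · simp [stdVec, hij] at hi

lemma stdVec_castSucc_ne_lastVec (j : Fin (n + 1)) : stdVec (n + 2) j.castSucc ≠ lastVec n :=
  fun h => (Fin.castSucc_lt_last j).ne (stdVec_injective h)

lemma neg_lastVec_ne_lastVec : -lastVec n ≠ lastVec n :=
  (stdVec_ne_neg_stdVec _ _).symm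

lemma phi_stdVec (a : Fin (n + 2) → ℝ) (i : Fin (n + 2)) : phi n a (stdVec (n + 2) i) = a i := by
  simp [phi, stdVec, Pi.single_apply]

lemma phi_neg (a x : Fin (n + 2) → ℝ) : phi n a (-x) = -phi n a x := by
  simp [phi]

lemma IsCPVertex.eq_pm_lastVec_or_exists_castSucc {v : Fin (n + 2) → ℝ}
    (hv : IsCPVertex (n + 2) v) :
    v = -lastVec n ∨ v = lastVec n ∨
      ∃ j : Fin (n + 1), v = stdVec (n + 2) j.castSucc ∨ v = -stdVec (n + 2) j.castSucc := by
  obtain ⟨i, hi⟩ := hv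
  rcases Fin.eq_castSucc_or_eq_last i with ⟨j, rfl⟩ | rfl
  · exact Or.inr (Or.inr ⟨j, hi⟩)
  · rcases hi with hi | hi <;> simp [hi, lastVec]

end Vectors

section SignVector

variable {n : ℕ} {l : List (Fin (n + 2) → ℝ)} {j : Fin (n + 1)}

lemma sigmaVec_eq_one_iff : sigmaVec n l j = 1 ↔ stdVec (n + 2) j.castSucc ∈ l := by
  unfold sigmaVec; split_ifs <;> simp_all

lemma sigmaVec_eq_neg_one_iff :
    sigmaVec n l j = -1 ↔ stdVec (n + 2) j.castSucc ∉ l ∧ -stdVec (n + 2) j.castSucc ∈ l := by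
  unfold sigmaVec; split_ifs <;> simp_all

lemma sigmaVec_eq_zero_iff :
    sigmaVec n l j = 0 ↔ stdVec (n + 2) j.castSucc ∉ l ∧ -stdVec (n + 2) j.castSucc ∉ l := by
  unfold sigmaVec; split_ifs <;> simp_all

lemma sigmaVec_eq_neg_one_or_zero_or_one :
    sigmaVec n l j = -1 ∨ sigmaVec n l j = 0 ∨ sigmaVec n l j = 1 := by
  unfold sigmaVec; split_ifs <;> simp

lemma ncard_signVectors_ne_zero (m : ℕ) :
    {u : Fin m → ℤ | (∀ i, u i = -1 ∨ u i = 0 ∨ u i = 1) ∧ u ≠ 0}.ncard = 3 ^ m - 1 := by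
  have h : {u : Fin m → ℤ | (∀ i, u i = -1 ∨ u i = 0 ∨ u i = 1) ∧ u ≠ 0} =
      ↑((Fintype.piFinset fun _ : Fin m => ({-1, 0, 1} : Finset ℤ)).erase 0) := by
    ext u
    simp [and_comm]
  rw [h, Set.ncard_coe_finset, Finset.card_erase_of_mem (by simp [Fintype.mem_piFinset]),
    Fintype.card_piFinset]
  simp

end SignVector

def MonoStep (n : ℕ) (a : Fin (n + 2) → ℝ) (u v : Fin (n + 2) → ℝ) : Prop :=
  phi n a u < phi n a v ∧ v ≠ -u

def signedVertexSet (n : ℕ) (u : Fin (n + 1) → ℤ) : Set (Fin (n + 2) → ℝ) :=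
  {v | v = -lastVec n ∨ v = lastVec n ∨ (∃ j, u j = 1 ∧ v = stdVec (n + 2) j.castSucc) ∨
    ∃ j, u j = -1 ∧ v = -stdVec (n + 2) j.castSucc}

section SignedVertexSet

variable {n : ℕ} {u : Fin (n + 1) → ℤ} {l : List (Fin (n + 2) → ℝ)}

lemma stdVec_mem_signedVertexSet (j : Fin (n + 1)) :
    stdVec (n + 2) j.castSucc ∈ signedVertexSet n u ↔ u j = 1 := by
  refine ⟨?_, fun h => Or.inr (Or.inr (Or.inl ⟨j, h, rfl⟩))⟩
  rintro (h | h | ⟨k, hk, h⟩ | ⟨k, -, h⟩)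
  · exact absurd h (stdVec_ne_neg_stdVec _ _)
  · exact absurd h (stdVec_castSucc_ne_lastVec j)
  · rwa [Fin.castSucc_injective _ (stdVec_injective h)]
  · exact absurd h (stdVec_ne_neg_stdVec _ _)

lemma neg_stdVec_mem_signedVertexSet (j : Fin (n + 1)) :
    -stdVec (n + 2) j.castSucc ∈ signedVertexSet n u ↔ u j = -1 := by
  refine ⟨?_, fun h => Or.inr (Or.inr (Or.inr ⟨j, h, rfl⟩))⟩
  rintro (h | h | ⟨k, -, h⟩ | ⟨k, hk, h⟩)
  · exact absurd (neg_injective h) (stdVec_castSucc_ne_lastVec j)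
  · exact absurd h.symm (stdVec_ne_neg_stdVec _ _)
  · exact absurd h.symm (stdVec_ne_neg_stdVec _ _)
  · rwa [Fin.castSucc_injective _ (stdVec_injective (neg_injective h))]

lemma sigmaVec_eq_of_mem_iff (hu : ∀ i, u i = -1 ∨ u i = 0 ∨ u i = 1)
    (h : ∀ v, v ∈ l ↔ v ∈ signedVertexSet n u) : sigmaVec n l = u := by
  funext j
  rcases hu j with hj | hj | hj
  · rw [hj, sigmaVec_eq_neg_one_iff, h, h, stdVec_mem_signedVertexSet,
      neg_stdVec_mem_signedVertexSet, hj]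
    norm_num
  · rw [hj, sigmaVec_eq_zero_iff, h, h, stdVec_mem_signedVertexSet,
      neg_stdVec_mem_signedVertexSet, hj]
    norm_num
  · rw [hj, sigmaVec_eq_one_iff, h, stdVec_mem_signedVertexSet, hj]

lemma combCoherent_of_mem_iff (h : ∀ v, v ∈ l ↔ v ∈ signedVertexSet n u) :
    CombCoherent n l := by
  rintro ⟨j, hpos, hneg⟩
  have h1 := (stdVec_mem_signedVertexSet j).1
    ((h _).1 (List.mem_of_mem_tail (List.mem_of_mem_dropLast hpos)))
  have h2 := (neg_stdVec_mem_signedVertexSet j).1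
    ((h _).1 (List.mem_of_mem_tail (List.mem_of_mem_dropLast hneg)))
  rw [h1] at h2
  norm_num at h2

end SignedVertexSet

lemma List.mem_tail_dropLast_of_ne {α : Type*} {l : List α} {x y v : α} (hx : l.head? = some x)
    (hy : l.getLast? = some y) (hv : v ∈ l) (hvx : v ≠ x) (hvy : v ≠ y) : v ∈ l.tail.dropLast := by
  obtain ⟨ys, rfl⟩ := List.getLast?_eq_some_iff.1 hy
  have hvys : v ∈ ys := by simpa [hvy] using hv
  obtain _ | ⟨z, zs⟩ := ys
  · simp at hvys
  · rw [← List.tail_dropLast, List.dropLast_concat]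
    simp only [List.cons_append, List.head?_cons, Option.some_inj] at hx
    exact List.mem_of_ne_of_mem (hx ▸ hvx) hvys

namespace IsMonoPath

variable {n : ℕ} {a : Fin (n + 2) → ℝ} {l l₁ l₂ : List (Fin (n + 2) → ℝ)}

lemma pairwise_phi_lt (hl : IsMonoPath n a l) : l.Pairwise fun u v => phi n a u < phi n a v :=
  have : Trans (fun u v => phi n a u < phi n a v) (fun u v => phi n a u < phi n a v)
      (fun u v => phi n a u < phi n a v) := ⟨lt_trans⟩
  (hl.2.2.2.imp fun _ _ h => h.1).pairwise

lemma eq_of_mem_iff (h₁ : IsMonoPath n a l₁) (h₂ : IsMonoPath n a l₂)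
    (h : ∀ v, v ∈ l₁ ↔ v ∈ l₂) : l₁ = l₂ :=
  have : Std.Irrefl fun u v => phi n a u < phi n a v := ⟨fun _ => lt_irrefl _⟩
  have : Std.Antisymm fun u v => phi n a u < phi n a v :=
    ⟨fun _ _ huv hvu => absurd (huv.trans hvu) (lt_irrefl _)⟩
  h₁.pairwise_phi_lt.eq_of_mem_iff h₂.pairwise_phi_lt h

lemma mem_iff_mem_signedVertexSet (hl : IsMonoPath n a l) (hc : CombCoherent n l)
    (v : Fin (n + 2) → ℝ) : v ∈ l ↔ v ∈ signedVertexSet n (sigmaVec n l) := by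
  obtain ⟨hhead, hlast, hvert, -⟩ := hl
  constructor
  · intro hv
    rcases (hvert v hv).eq_pm_lastVec_or_exists_castSucc with rfl | rfl | ⟨j, rfl | rfl⟩
    · exact Or.inl rfl
    · exact Or.inr (Or.inl rfl)
    · exact (stdVec_mem_signedVertexSet j).2 (sigmaVec_eq_one_iff.2 hv)
    · refine (neg_stdVec_mem_signedVertexSet j).2
        (sigmaVec_eq_neg_one_iff.2 ⟨fun hpos => hc ?_, hv⟩)
      exact ⟨j, List.mem_tail_dropLast_of_ne hhead hlast hpos (stdVec_ne_neg_stdVec _ _)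
          (stdVec_castSucc_ne_lastVec j),
        List.mem_tail_dropLast_of_ne hhead hlast hv
          (fun h => stdVec_castSucc_ne_lastVec j (neg_injective h))
          (fun h => stdVec_ne_neg_stdVec _ _ h.symm)⟩
  · rintro (rfl | rfl | ⟨j, hj, rfl⟩ | ⟨j, hj, rfl⟩)
    · exact List.mem_of_mem_head? hhead
    · exact List.mem_of_getLast? hlast
    · exact sigmaVec_eq_one_iff.1 hj
    · exact (sigmaVec_eq_neg_one_iff.1 hj).2

lemma sigmaVec_ne_zero (hl : IsMonoPath n a l) : sigmaVec n l ≠ 0 := by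
  intro hσ
  have hpm : ∀ v ∈ l, v = -lastVec n ∨ v = lastVec n := by
    intro v hv
    rcases (hl.2.2.1 v hv).eq_pm_lastVec_or_exists_castSucc with h | h | ⟨j, rfl | rfl⟩
    · exact Or.inl h
    · exact Or.inr h
    · exact absurd hv (sigmaVec_eq_zero_iff.1 (congrFun hσ j)).1
    · exact absurd hv (sigmaVec_eq_zero_iff.1 (congrFun hσ j)).2
  obtain ⟨hhead, hlast, -, hchain⟩ := hl
  obtain _ | ⟨x, _ | ⟨y, t⟩⟩ := l
  · simp at hhead
  · simp only [List.head?_cons, List.getLast?_singleton, Option.some_inj] at hhead hlast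
    exact neg_lastVec_ne_lastVec (hhead.symm.trans hlast)
  · simp only [List.head?_cons, Option.some_inj] at hhead
    obtain ⟨hφ, hne⟩ := (List.isChain_cons_cons.1 hchain).1
    rcases hpm y (by simp) with rfl | rfl
    · exact lt_irrefl _ (hhead ▸ hφ)
    · exact hne (hhead ▸ (neg_neg _).symm)

end IsMonoPath

noncomputable def negVertices (n : ℕ) (u : Fin (n + 1) → ℤ) : List (Fin (n + 2) → ℝ) :=
  ((List.finRange (n + 1)).reverse.filter fun j => u j = -1).map
    fun j => -stdVec (n + 2) j.castSucc

noncomputable def posVertices (n : ℕ) (u : Fin (n + 1) → ℤ) : List (Fin (n + 2) → ℝ) :=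
  ((List.finRange (n + 1)).filter fun j => u j = 1).map fun j => stdVec (n + 2) j.castSucc

noncomputable def signPath (n : ℕ) (u : Fin (n + 1) → ℤ) : List (Fin (n + 2) → ℝ) :=
  [-lastVec n] ++ (negVertices n u ++ posVertices n u) ++ [lastVec n]

section SignPath

variable {n : ℕ} {u : Fin (n + 1) → ℤ} {v : Fin (n + 2) → ℝ}

lemma mem_negVertices : v ∈ negVertices n u ↔ ∃ j, u j = -1 ∧ v = -stdVec (n + 2) j.castSucc := by
  simp [negVertices, eq_comm]

lemma mem_posVertices : v ∈ posVertices n u ↔ ∃ j, u j = 1 ∧ v = stdVec (n + 2) j.castSucc := by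
  simp [posVertices, eq_comm]

lemma mem_signPath : v ∈ signPath n u ↔ v ∈ signedVertexSet n u := by
  simp only [signPath, List.mem_append, List.mem_singleton, mem_negVertices, mem_posVertices,
    signedVertexSet, Set.mem_ofPred_eq]
  grind

lemma sigmaVec_signPath (hu : ∀ i, u i = -1 ∨ u i = 0 ∨ u i = 1) :
    sigmaVec n (signPath n u) = u :=
  sigmaVec_eq_of_mem_iff hu fun _ => mem_signPath

lemma combCoherent_signPath : CombCoherent n (signPath n u) :=
  combCoherent_of_mem_iff fun _ => mem_signPath

variable {a : Fin (n + 2) → ℝ} {i j : Fin (n + 2)}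

lemma monoStep_neg_stdVec_neg_stdVec (ha : StrictMono a) (hij : i < j) :
    MonoStep n a (-stdVec (n + 2) j) (-stdVec (n + 2) i) := by
  refine ⟨?_, fun h => stdVec_ne_neg_stdVec j i (by simpa using h.symm)⟩
  rw [phi_neg, phi_neg, phi_stdVec, phi_stdVec, neg_lt_neg_iff]
  exact ha hij

lemma monoStep_stdVec_stdVec (ha : StrictMono a) (hij : i < j) :
    MonoStep n a (stdVec (n + 2) i) (stdVec (n + 2) j) := by
  refine ⟨?_, stdVec_ne_neg_stdVec j i⟩
  rw [phi_stdVec, phi_stdVec]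
  exact ha hij

lemma monoStep_neg_stdVec_stdVec (hpos : ∀ k, 0 < a k) (hij : i ≠ j) :
    MonoStep n a (-stdVec (n + 2) i) (stdVec (n + 2) j) := by
  refine ⟨?_, fun h => hij (stdVec_injective (by simpa using h.symm))⟩
  rw [phi_neg, phi_stdVec, phi_stdVec]
  linarith [hpos i, hpos j]

lemma pairwise_monoStep_interior (hpos : ∀ k, 0 < a k) (ha : StrictMono a) :
    (negVertices n u ++ posVertices n u).Pairwise (MonoStep n a) := by
  refine List.pairwise_append.2 ⟨?_, ?_, ?_⟩
  · refine List.pairwise_map.2 (List.Pairwise.filter _ (List.pairwise_reverse.2 ?_))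
    exact (List.pairwise_lt_finRange _).imp fun hjk =>
      monoStep_neg_stdVec_neg_stdVec ha (Fin.castSucc_lt_castSucc_iff.2 hjk)
  · refine List.pairwise_map.2 (List.Pairwise.filter _ ?_)
    exact (List.pairwise_lt_finRange _).imp fun hjk =>
      monoStep_stdVec_stdVec ha (Fin.castSucc_lt_castSucc_iff.2 hjk)
  · intro x hx y hy
    obtain ⟨j, hj, rfl⟩ := mem_negVertices.1 hx
    obtain ⟨k, hk, rfl⟩ := mem_posVertices.1 hy
    refine monoStep_neg_stdVec_stdVec hpos fun hjk => ?_
    rw [Fin.castSucc_injective _ hjk, hk] at hj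
    norm_num at hj

lemma monoStep_neg_lastVec_of_mem (hpos : ∀ k, 0 < a k) (ha : StrictMono a)
    (hv : v ∈ negVertices n u ++ posVertices n u) : MonoStep n a (-lastVec n) v := by
  rcases List.mem_append.1 hv with hv | hv
  · obtain ⟨j, -, rfl⟩ := mem_negVertices.1 hv
    exact monoStep_neg_stdVec_neg_stdVec ha (Fin.castSucc_lt_last j)
  · obtain ⟨j, -, rfl⟩ := mem_posVertices.1 hv
    exact monoStep_neg_stdVec_stdVec hpos (Fin.castSucc_lt_last j).ne'

lemma monoStep_lastVec_of_mem (hpos : ∀ k, 0 < a k) (ha : StrictMono a)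
    (hv : v ∈ negVertices n u ++ posVertices n u) : MonoStep n a v (lastVec n) := by
  rcases List.mem_append.1 hv with hv | hv
  · obtain ⟨j, -, rfl⟩ := mem_negVertices.1 hv
    exact monoStep_neg_stdVec_stdVec hpos (Fin.castSucc_lt_last j).ne
  · obtain ⟨j, -, rfl⟩ := mem_posVertices.1 hv
    exact monoStep_stdVec_stdVec ha (Fin.castSucc_lt_last j)

lemma negVertices_append_posVertices_ne_nil (hu : ∀ i, u i = -1 ∨ u i = 0 ∨ u i = 1) (hne : u ≠ 0) :
    negVertices n u ++ posVertices n u ≠ [] := by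
  obtain ⟨j, hj⟩ := Function.ne_iff.1 hne
  rcases hu j with h | h | h
  · exact List.ne_nil_of_mem (List.mem_append_left _ (mem_negVertices.2 ⟨j, h, rfl⟩))
  · exact absurd h hj
  · exact List.ne_nil_of_mem (List.mem_append_right _ (mem_posVertices.2 ⟨j, h, rfl⟩))

lemma isMonoPath_signPath (hpos : ∀ k, 0 < a k) (ha : StrictMono a)
    (hu : ∀ i, u i = -1 ∨ u i = 0 ∨ u i = 1) (hne : u ≠ 0) : IsMonoPath n a (signPath n u) := by
  refine ⟨by simp [signPath], List.getLast?_concat, fun v hv => ?_, ?_⟩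
  · rcases mem_signPath.1 hv with rfl | rfl | ⟨j, -, rfl⟩ | ⟨j, -, rfl⟩
    · exact ⟨Fin.last (n + 1), Or.inr rfl⟩
    · exact ⟨Fin.last (n + 1), Or.inl rfl⟩
    · exact ⟨j.castSucc, Or.inl rfl⟩
    · exact ⟨j.castSucc, Or.inr rfl⟩
  · have hinterior := pairwise_monoStep_interior (u := u) hpos ha
    refine List.IsChain.append_overlap (List.Pairwise.isChain ?_) (List.Pairwise.isChain ?_)
      (negVertices_append_posVertices_ne_nil hu hne)
    · exact List.pairwise_cons.2 ⟨fun v hv => monoStep_neg_lastVec_of_mem hpos ha hv, hinterior⟩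
    · exact List.pairwise_append.2 ⟨hinterior, List.pairwise_singleton _ _,
        fun v hv w hw => (List.mem_singleton.1 hw) ▸ monoStep_lastVec_of_mem hpos ha hv⟩

end SignPath

lemma sigmaVec_bijOn {n : ℕ} {a : Fin (n + 2) → ℝ} (hpos : ∀ i, 0 < a i) (ha : StrictMono a) :
    Set.BijOn (sigmaVec n)
      {l : List (Fin (n + 2) → ℝ) | IsMonoPath n a l ∧ CombCoherent n l}
      {u : Fin (n + 1) → ℤ | (∀ i, u i = -1 ∨ u i = 0 ∨ u i = 1) ∧ u ≠ 0} := by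
  refine ⟨fun l hl => ⟨fun _ => sigmaVec_eq_neg_one_or_zero_or_one, hl.1.sigmaVec_ne_zero⟩,
    ?_, ?_⟩
  · rintro l₁ ⟨hl₁, hc₁⟩ l₂ ⟨hl₂, hc₂⟩ hσ
    refine hl₁.eq_of_mem_iff hl₂ fun v => ?_
    rw [hl₁.mem_iff_mem_signedVertexSet hc₁, hl₂.mem_iff_mem_signedVertexSet hc₂, hσ]
  · rintro u ⟨hu, hne⟩
    exact ⟨signPath n u, ⟨isMonoPath_signPath hpos ha hu hne, combCoherent_signPath⟩,
      sigmaVec_signPath hu⟩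

/-- The map `γ ↦ σ(γ)` is a bijection between the combinatorially
coherent `φ`-monotone paths on `◇^{n+2}` and the nonzero sign vectors in
`{-1,0,1}^{n+1}`; in particular there are exactly `3^{n+1} - 1` combinatorially
coherent `φ`-monotone paths. -/
theorem sigma_bijOn_and_card (n : ℕ) (a : Fin (n + 2) → ℝ)
    (h0 : 0 < a 0) (ha : StrictMono a) :
    Set.BijOn (sigmaVec n)
      {l : List (Fin (n + 2) → ℝ) | IsMonoPath n a l ∧ CombCoherent n l}
      {u : Fin (n + 1) → ℤ | (∀ i, u i = -1 ∨ u i = 0 ∨ u i = 1) ∧ u ≠ 0} ∧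
    Set.ncard {l : List (Fin (n + 2) → ℝ) | IsMonoPath n a l ∧ CombCoherent n l} =
      3 ^ (n + 1) - 1 := by
  have hbij := sigmaVec_bijOn (fun i => h0.trans_le (ha.monotone (Fin.zero_le i))) ha
  exact ⟨hbij, hbij.ncard_eq.trans (ncard_signVectors_ne_zero (n + 1))⟩
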